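/- Under the subsonic condition sup_τ ‖p'(τ)‖ ≤ c₁ < c, the fixed-point equation c(t - τ) = ‖x - p(τ)‖ has exactly one solution τ(x,t) for every (x,t), and τ(x,t) ≤ t. -/

import Mathlib

/-!
The equation `c (t - τ) = ‖x - p τ‖` says that `τ` is a fixed point of
`τ ↦ t - ‖x - p τ‖ / c`. By the mean value inequality `p` is `c₁`-Lipschitz, hence so is
`τ ↦ ‖x - p τ‖`, and the map is a contraction of `ℝ` with constant `c₁ / c < 1`; Banach's
fixed point theorem gives existence and uniqueness. Since the right-hand side is a norm,
`t - τ ≥ 0`.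
-/

open scoped NNReal

theorem LipschitzWith.existsUnique_mul_sub_eq {f : ℝ → ℝ} {K : ℝ≥0} (hf : LipschitzWith K f)
    {c : ℝ} (hc : 0 < c) (hK : (K : ℝ) < c) (t : ℝ) : ∃! τ, c * (t - τ) = f τ := by
  set g : ℝ → ℝ := fun τ => t - f τ / c
  have hg : ContractingWith (K / c.toNNReal) g := by
    refine ⟨?_, LipschitzWith.of_dist_le_mul fun a b => ?_⟩
    · rw [← NNReal.coe_lt_coe, NNReal.coe_div, Real.coe_toNNReal _ hc.le, NNReal.coe_one]
      exact (div_lt_one hc).2 hK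
    · calc dist (g a) (g b) = dist (f a) (f b) / c := by
            rw [Real.dist_eq, Real.dist_eq, sub_sub_sub_cancel_left, ← sub_div, abs_div,
              abs_of_pos hc, abs_sub_comm]
        _ ≤ K * dist a b / c := by gcongr; exact hf.dist_le_mul a b
        _ = (K / c.toNNReal : ℝ≥0) * dist a b := by
            rw [NNReal.coe_div, Real.coe_toNNReal _ hc.le]; ring
  have fixed_iff (τ : ℝ) : c * (t - τ) = f τ ↔ Function.IsFixedPt g τ := by
    simp only [Function.IsFixedPt, g]
    constructor <;> intro hτ
    · rw [← hτ]; field_simp; ring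
    · field_simp at hτ; linarith
  exact ⟨hg.fixedPoint g, (fixed_iff _).2 hg.fixedPoint_isFixedPt,
    fun τ hτ => hg.fixedPoint_unique ((fixed_iff τ).1 hτ)⟩

theorem stmt1_general (c c₁ : ℝ) (hc : 0 < c) (h : c₁ < c)
    (p : ℝ → EuclideanSpace ℝ (Fin 3)) (hp : ContDiff ℝ 1 p)
    (hsub : ∀ τ : ℝ, ‖deriv p τ‖ ≤ c₁)
    (x : EuclideanSpace ℝ (Fin 3)) (t : ℝ) :
    (∃! τ : ℝ, c * (t - τ) = ‖x - p τ‖) ∧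
      ∀ τ : ℝ, c * (t - τ) = ‖x - p τ‖ → τ ≤ t := by
  have hp_lip : LipschitzWith c₁.toNNReal p :=
    lipschitzWith_of_nnnorm_deriv_le (hp.differentiable one_ne_zero) fun τ => by
      rw [← NNReal.coe_le_coe, coe_nnnorm]
      exact (hsub τ).trans (Real.le_coe_toNNReal c₁)
  have hdist_lip : LipschitzWith c₁.toNNReal fun τ => ‖x - p τ‖ := by
    simpa only [one_mul, Function.comp_def, dist_eq_norm] using
      (LipschitzWith.dist_right x).comp hp_lip
  refine ⟨hdist_lip.existsUnique_mul_sub_eq hc ?_ t, fun τ hτ => ?_⟩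
  · rw [Real.coe_toNNReal']
    exact max_lt h hc
  · nlinarith [norm_nonneg (x - p τ)]

theorem stmt1 (c c₁ : ℝ) (hc : 0 < c) (hc₁ : 0 ≤ c₁) (h : c₁ < c)
    (p : ℝ → EuclideanSpace ℝ (Fin 3)) (hp : ContDiff ℝ 1 p)
    (hsub : ∀ τ : ℝ, ‖deriv p τ‖ ≤ c₁)
    (x : EuclideanSpace ℝ (Fin 3)) (t : ℝ) :
    (∃! τ : ℝ, c * (t - τ) = ‖x - p τ‖) ∧
      ∀ τ : ℝ, c * (t - τ) = ‖x - p τ‖ → τ ≤ t :=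
  stmt1_general c c₁ hc h p hp hsub x t
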